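/- Let (α,β) ∈ ℂ² with (α,β) ≠ (0,0), and set F = α·P₁ + β·P₂ where P₁ = z₀²z₁²z₂² and P₂ = z₀⁵z₁ + z₂⁵z₀ + z₁⁵z₂. There exists a nonzero point of ℂ³ at which all three partial derivatives ∂F/∂z₀, ∂F/∂z₁, ∂F/∂z₂ vanish if and only if β = 0 or α³ = −27·β³. In particular, up to nonzero scalar multiples, the pencil spanned by P₁ and P₂ contains exactly four polynomials defining singular plane projective curves: P₁ and the three polynomials 3P₁ − ζᵏP₂ where ζ is a primitive cube root of unity and k = 0, 1, 2. -/

import Mathlib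

/-!
For `β ≠ 0` a singular point of `αP₁ + βP₂` has no zero coordinate: if `x = 0` then
`∂₂F = βy⁵` forces `y = 0`, and the equations are invariant under cyclic rotation of the
coordinates. Eliminating `α` through `x∂₀F - y∂₁F` and `y∂₁F - z∂₂F` gives
`x⁵y = y⁵z = z⁵x =: B`, so `B³ = (xyz)⁶`, and then `0 = x∂₀F = 2α(xyz)² + 6βB`; cubing yields
`α³ = -27β³`. Conversely `(1, 0, 0)` is singular for `P₁`, and
`(1, ω, ω²)` is singular for `-3βω P₁ + βP₂` whenever `ω³ = 1`. Finally `P₁` and `P₂` are linearly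
independent, so the pencil members are determined by their coefficients.
-/

open MvPolynomial

noncomputable def P₁ : MvPolynomial (Fin 3) ℂ := X 0 ^ 2 * X 1 ^ 2 * X 2 ^ 2

noncomputable def P₂ : MvPolynomial (Fin 3) ℂ :=
  X 0 ^ 5 * X 1 + X 2 ^ 5 * X 0 + X 1 ^ 5 * X 2

def IsSingularCurve (F : MvPolynomial (Fin 3) ℂ) : Prop :=
  ∃ v : Fin 3 → ℂ, v ≠ 0 ∧ ∀ i : Fin 3, eval v (pderiv i F) = 0

theorem IsPrimitiveRoot.pow_eq_pow_iff_exists_eq_pow_mul {R : Type*} [CommRing R] [IsDomain R]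
    {n : ℕ} [NeZero n] {ζ : R} (hζ : IsPrimitiveRoot ζ n) {a b : R} :
    b ^ n = a ^ n ↔ ∃ k : Fin n, b = ζ ^ (k : ℕ) * a := by
  rw [← Polynomial.mem_nthRoots (NeZero.pos n), hζ.nthRoots_eq rfl]
  simp only [Multiset.mem_map, Multiset.mem_range, Fin.exists_iff, exists_prop, eq_comm (a := b)]

def IsPencilCritical (α β x y z : ℂ) : Prop :=
  2 * α * x * y ^ 2 * z ^ 2 + β * (5 * x ^ 4 * y + z ^ 5) = 0 ∧
  2 * α * x ^ 2 * y * z ^ 2 + β * (x ^ 5 + 5 * y ^ 4 * z) = 0 ∧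
  2 * α * x ^ 2 * y ^ 2 * z + β * (y ^ 5 + 5 * z ^ 4 * x) = 0

lemma forall_eval_pderiv_pencil_eq_zero_iff (α β : ℂ) (v : Fin 3 → ℂ) :
    (∀ i, eval v (pderiv i (C α * P₁ + C β * P₂)) = 0) ↔
      IsPencilCritical α β (v 0) (v 1) (v 2) := by
  have h₀ : eval v (pderiv 0 (C α * P₁ + C β * P₂)) =
      2 * α * v 0 * v 1 ^ 2 * v 2 ^ 2 + β * (5 * v 0 ^ 4 * v 1 + v 2 ^ 5) := by
    simp [P₁, P₂, pderiv_X]; ring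
  have h₁ : eval v (pderiv 1 (C α * P₁ + C β * P₂)) =
      2 * α * v 0 ^ 2 * v 1 * v 2 ^ 2 + β * (v 0 ^ 5 + 5 * v 1 ^ 4 * v 2) := by
    simp [P₁, P₂, pderiv_X]; ring
  have h₂ : eval v (pderiv 2 (C α * P₁ + C β * P₂)) =
      2 * α * v 0 ^ 2 * v 1 ^ 2 * v 2 + β * (v 1 ^ 5 + 5 * v 2 ^ 4 * v 0) := by
    simp [P₁, P₂, pderiv_X]; ring
  simp only [Fin.forall_fin_succ, IsEmpty.forall_iff, and_true, IsPencilCritical]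
  exact Iff.of_eq (by rw [← h₀, ← h₁, ← h₂]; rfl)

lemma isSingularCurve_pencil_iff_exists_isPencilCritical (α β : ℂ) :
    IsSingularCurve (C α * P₁ + C β * P₂) ↔
      ∃ x y z : ℂ, ¬(x = 0 ∧ y = 0 ∧ z = 0) ∧ IsPencilCritical α β x y z := by
  simp only [IsSingularCurve, forall_eval_pderiv_pencil_eq_zero_iff]
  constructor
  · rintro ⟨v, hv, hcrit⟩
    refine ⟨v 0, v 1, v 2, fun h0 => hv ?_, hcrit⟩
    ext i; fin_cases i <;> simp [h0]
  · rintro ⟨x, y, z, hxyz, hcrit⟩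
    exact ⟨![x, y, z], fun h0 => hxyz (by simpa [funext_iff, Fin.forall_fin_succ] using h0), hcrit⟩

namespace IsPencilCritical

variable {α β x y z : ℂ}

lemma rotate (h : IsPencilCritical α β x y z) : IsPencilCritical α β y z x := by
  obtain ⟨h₀, h₁, h₂⟩ := h
  exact ⟨by linear_combination h₁, by linear_combination h₂, by linear_combination h₀⟩

lemma eq_zero_of_eq_zero (hβ : β ≠ 0) (h : IsPencilCritical α β x y z) (hx : x = 0) : y = 0 := by
  have : β * y ^ 5 = 0 := by simpa [hx] using h.2.2
  exact pow_eq_zero_iff (by norm_num) |>.mp ((mul_eq_zero.mp this).resolve_left hβ)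

lemma ne_zero (hβ : β ≠ 0) (h : IsPencilCritical α β x y z) (hxyz : ¬(x = 0 ∧ y = 0 ∧ z = 0)) :
    x ≠ 0 ∧ y ≠ 0 ∧ z ≠ 0 := by
  have hx := h.eq_zero_of_eq_zero hβ
  have hy := h.rotate.eq_zero_of_eq_zero hβ
  have hz := h.rotate.rotate.eq_zero_of_eq_zero hβ
  tauto

lemma monomials_eq (hβ : β ≠ 0) (h : IsPencilCritical α β x y z) :
    x ^ 5 * y = y ^ 5 * z ∧ z ^ 5 * x = y ^ 5 * z := by
  obtain ⟨h₀, h₁, h₂⟩ := h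
  have e₁ : 4 * (x ^ 5 * y) + z ^ 5 * x - 5 * (y ^ 5 * z) = 0 :=
    (mul_eq_zero.mp (by linear_combination x * h₀ - y * h₁)).resolve_left hβ
  have e₂ : x ^ 5 * y + 4 * (y ^ 5 * z) - 5 * (z ^ 5 * x) = 0 :=
    (mul_eq_zero.mp (by linear_combination y * h₁ - z * h₂)).resolve_left hβ
  constructor
  · linear_combination (5 * e₁ + e₂) / 21
  · linear_combination (e₁ - 4 * e₂) / 21

lemma cube_eq (hβ : β ≠ 0) (h : IsPencilCritical α β x y z) (hxyz : ¬(x = 0 ∧ y = 0 ∧ z = 0)) :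
    α ^ 3 = -27 * β ^ 3 := by
  obtain ⟨hx, hy, hz⟩ := h.ne_zero hβ hxyz
  obtain ⟨hA, hC⟩ := h.monomials_eq hβ
  set B := y ^ 5 * z
  have hα : α * (x * y * z) ^ 2 = -3 * β * B := by
    linear_combination (x * h.1 - 5 * β * hA - β * hC) / 2
  have hB : B ^ 3 = (x * y * z) ^ 6 := by
    linear_combination -B * (z ^ 5 * x) * hA - B ^ 2 * hC
  have hxyz6 : (x * y * z) ^ 6 ≠ 0 := by positivity
  refine mul_right_cancel₀ hxyz6 ?_
  linear_combination
    (α ^ 2 * (x * y * z) ^ 4 - 3 * α * β * B * (x * y * z) ^ 2 + 9 * β ^ 2 * B ^ 2) * hα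
      - 27 * β ^ 3 * hB

end IsPencilCritical

lemma isPencilCritical_one_zero_zero (α : ℂ) : IsPencilCritical α 0 1 0 0 := by
  simp [IsPencilCritical]

lemma isPencilCritical_of_pow_three_eq_one (β : ℂ) {ω : ℂ} (hω : ω ^ 3 = 1) :
    IsPencilCritical (-3 * β * ω) β 1 ω (ω ^ 2) := by
  refine ⟨?_, ?_, ?_⟩
  · linear_combination β * ω * (ω ^ 6 - 5 * ω ^ 3 - 5) * hω
  · linear_combination -β * (ω ^ 3 + 1) * hω
  · linear_combination 5 * β * ω ^ 5 * hω

theorem isSingularCurve_pencil_iff (α β : ℂ) :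
    IsSingularCurve (C α * P₁ + C β * P₂) ↔ β = 0 ∨ α ^ 3 = -27 * β ^ 3 := by
  rw [isSingularCurve_pencil_iff_exists_isPencilCritical]
  constructor
  · rintro ⟨x, y, z, hxyz, h⟩
    by_cases hβ : β = 0
    · exact .inl hβ
    · exact .inr (h.cube_eq hβ hxyz)
  · intro hcase
    by_cases hβ : β = 0
    · exact ⟨1, 0, 0, by simp, hβ ▸ isPencilCritical_one_zero_zero α⟩
    obtain ⟨ω, rfl⟩ : ∃ ω, α = -3 * β * ω := ⟨-α / (3 * β), by field_simp⟩
    have hω : ω ^ 3 = 1 := mul_left_cancel₀ (by simpa using hβ : -27 * β ^ 3 ≠ 0)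
      (by linear_combination hcase.resolve_left hβ)
    exact ⟨1, ω, ω ^ 2, by simp, isPencilCritical_of_pow_three_eq_one β hω⟩

lemma pencil_eq_pencil_iff {α β γ δ : ℂ} :
    C α * P₁ + C β * P₂ = C γ * P₁ + C δ * P₂ ↔ α = γ ∧ β = δ := by
  constructor
  · intro h
    have h₁ := congrArg (eval ![1, 1, 0]) h
    have h₂ := congrArg (eval ![1, 1, 1]) h
    simp [P₁, P₂] at h₁ h₂
    exact ⟨by linear_combination h₂ - 3 * h₁, h₁⟩
  · rintro ⟨rfl, rfl⟩
    rfl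

lemma pencil_eq_C_mul_P₁_iff {α β c : ℂ} :
    C α * P₁ + C β * P₂ = C c * P₁ ↔ α = c ∧ β = 0 := by
  rw [← pencil_eq_pencil_iff (δ := 0), map_zero, zero_mul, add_zero]

lemma pencil_eq_C_mul_iff {α β c w : ℂ} :
    C α * P₁ + C β * P₂ = C c * (3 * P₁ - C w * P₂) ↔ α = 3 * c ∧ β = -(c * w) := by
  rw [← pencil_eq_pencil_iff]
  simp only [map_mul, map_neg, map_ofNat]
  constructor <;> intro h <;> linear_combination h

lemma cube_eq_neg_twentySeven_mul_cube_iff {ζ : ℂ} (hζ : IsPrimitiveRoot ζ 3) {α β : ℂ}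
    (hβ : β ≠ 0) :
    α ^ 3 = -27 * β ^ 3 ↔ ∃ c, c ≠ 0 ∧ ∃ k : Fin 3, α = 3 * c ∧ β = -(c * ζ ^ (k : ℕ)) := by
  have : α ^ 3 = -27 * β ^ 3 ↔ (-3 * β) ^ 3 = α ^ 3 :=
    ⟨fun h => by linear_combination -h, fun h => by linear_combination -h⟩
  rw [this, hζ.pow_eq_pow_iff_exists_eq_pow_mul]
  constructor
  · rintro ⟨k, hk⟩
    have hα : α ≠ 0 := by rintro rfl; exact hβ (by linear_combination -hk / 3)
    exact ⟨α / 3, by simpa using hα, k, by ring, by linear_combination -hk / 3⟩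
  · rintro ⟨c, -, k, rfl, rfl⟩
    exact ⟨k, by ring⟩

/-- For `(α,β) ≠ (0,0)` and `F = α·P₁ + β·P₂`, the curve `{F = 0}` is singular iff
`β = 0` or `α³ = −27·β³`.  In particular, up to nonzero scalar multiples the pencil spanned
by `P₁` and `P₂` contains exactly four singular members: `P₁` and the three polynomials
`3P₁ − ζᵏP₂`, `k = 0, 1, 2`, for a primitive cube root of unity ζ. -/
theorem pencil_singular_members (α β : ℂ) (h : ¬(α = 0 ∧ β = 0)) :
    (IsSingularCurve (C α * P₁ + C β * P₂) ↔ (β = 0 ∨ α ^ 3 = -27 * β ^ 3)) ∧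
    (∀ ζ : ℂ, IsPrimitiveRoot ζ 3 →
      (IsSingularCurve (C α * P₁ + C β * P₂) ↔
        ((∃ c : ℂ, c ≠ 0 ∧ C α * P₁ + C β * P₂ = C c * P₁) ∨
          (∃ c : ℂ, c ≠ 0 ∧ ∃ k : Fin 3,
            C α * P₁ + C β * P₂ = C c * (3 * P₁ - C (ζ ^ (k : ℕ)) * P₂))))) := by
  refine ⟨isSingularCurve_pencil_iff α β, fun ζ hζ => ?_⟩
  simp only [isSingularCurve_pencil_iff, pencil_eq_C_mul_P₁_iff, pencil_eq_C_mul_iff]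
  by_cases hβ : β = 0
  · have hα : α ≠ 0 := fun hα => h ⟨hα, hβ⟩
    exact iff_of_true (.inl hβ) (.inl ⟨α, hα, rfl, hβ⟩)
  · simp only [hβ, false_or, and_false, exists_const_iff,
      cube_eq_neg_twentySeven_mul_cube_iff hζ hβ]
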